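/- arXiv:0810.1971 — 3 statements merged into one kernel-verified Lean document; each statement's English description precedes it below -/
import Mathlib

section
/- For all x, y, z, w ∈ M, the identity ⁅⁅ι(x), ι(y)⁆, ⁅ι(z), ι(w)⁆⁆ = 2·polar(y,z)·⁅ι(x), ι(w)⁆ − 2·polar(x,z)·⁅ι(y), ι(w)⁆ + 2·polar(y,w)·⁅ι(z), ι(x)⁆ − 2·polar(x,w)·⁅ι(z), ι(y)⁆ holds in the Clifford algebra of Q; consequently the commutator of any two commutators of vectors is again an R-linear combination of commutators of vectors. -/
open CliffordAlgebra QuadraticMap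

/-- In the Clifford algebra of a quadratic form `Q`, for vectors `x, y, z, w`,
`⁅⁅ι(x), ι(y)⁆, ⁅ι(z), ι(w)⁆⁆ = 2·polar(y,z)·⁅ι(x), ι(w)⁆ − 2·polar(x,z)·⁅ι(y), ι(w)⁆
+ 2·polar(y,w)·⁅ι(z), ι(x)⁆ − 2·polar(x,w)·⁅ι(z), ι(y)⁆`; consequently the commutator of any two
commutators of vectors lies in the `R`-linear span of commutators of vectors. -/
theorem clifford_bracket_of_brackets (R : Type*) [CommRing R] (M : Type*) [AddCommGroup M]
    [Module R M] (Q : QuadraticForm R M) :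
    (∀ x y z w : M,
      ⁅⁅CliffordAlgebra.ι Q x, CliffordAlgebra.ι Q y⁆,
          ⁅CliffordAlgebra.ι Q z, CliffordAlgebra.ι Q w⁆⁆ =
        (2 * QuadraticMap.polar (⇑Q) y z) • ⁅CliffordAlgebra.ι Q x, CliffordAlgebra.ι Q w⁆ -
          (2 * QuadraticMap.polar (⇑Q) x z) • ⁅CliffordAlgebra.ι Q y, CliffordAlgebra.ι Q w⁆ +
          (2 * QuadraticMap.polar (⇑Q) y w) • ⁅CliffordAlgebra.ι Q z, CliffordAlgebra.ι Q x⁆ -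
          (2 * QuadraticMap.polar (⇑Q) x w) • ⁅CliffordAlgebra.ι Q z, CliffordAlgebra.ι Q y⁆) ∧
    ∀ x y z w : M,
      ⁅⁅CliffordAlgebra.ι Q x, CliffordAlgebra.ι Q y⁆,
          ⁅CliffordAlgebra.ι Q z, CliffordAlgebra.ι Q w⁆⁆ ∈
        Submodule.span R
          {c : CliffordAlgebra Q | ∃ u v : M, c = ⁅CliffordAlgebra.ι Q u, CliffordAlgebra.ι Q v⁆} := by
  have hswap : ∀ u v : M, ι Q v * ι Q u = polar (⇑Q) u v • (1 : CliffordAlgebra Q) - ι Q u * ι Q v := by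
    intro u v
    rw [ι_mul_ι_comm, Algebra.algebraMap_eq_smul_one, polar_comm]
  have hswap' : ∀ (u v : M) (t : CliffordAlgebra Q),
      ι Q v * (ι Q u * t) = polar (⇑Q) u v • t - ι Q u * (ι Q v * t) := by
    intro u v t
    rw [← mul_assoc, hswap, sub_mul, smul_mul_assoc, one_mul, mul_assoc]
  have main : ∀ x y z w : M,
      ⁅⁅CliffordAlgebra.ι Q x, CliffordAlgebra.ι Q y⁆,
          ⁅CliffordAlgebra.ι Q z, CliffordAlgebra.ι Q w⁆⁆ =
        (2 * QuadraticMap.polar (⇑Q) y z) • ⁅CliffordAlgebra.ι Q x, CliffordAlgebra.ι Q w⁆ -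
          (2 * QuadraticMap.polar (⇑Q) x z) • ⁅CliffordAlgebra.ι Q y, CliffordAlgebra.ι Q w⁆ +
          (2 * QuadraticMap.polar (⇑Q) y w) • ⁅CliffordAlgebra.ι Q z, CliffordAlgebra.ι Q x⁆ -
          (2 * QuadraticMap.polar (⇑Q) x w) • ⁅CliffordAlgebra.ι Q z, CliffordAlgebra.ι Q y⁆ := by
    intro x y z w
    simp only [Ring.lie_def, sub_mul, mul_sub, smul_sub, smul_mul_assoc, mul_smul_comm,
      mul_assoc]
    simp only [hswap' y x, hswap' z x, hswap' z y, hswap' w x, hswap' w y, hswap' w z,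
      hswap y x, hswap z x, hswap z y, hswap w x, hswap w y, hswap w z,
      mul_sub, sub_mul, smul_sub, smul_mul_assoc, mul_smul_comm, mul_assoc, mul_one, one_mul,
      smul_smul]
    simp only [polar_comm (⇑Q) x z, polar_comm (⇑Q) y z, polar_comm (⇑Q) x w,
      polar_comm (⇑Q) y w]
    module
  refine ⟨main, fun x y z w => ?_⟩
  rw [main x y z w]
  have mem : ∀ u v : M, ⁅CliffordAlgebra.ι Q u, CliffordAlgebra.ι Q v⁆ ∈
      Submodule.span R {c : CliffordAlgebra Q | ∃ u v : M, c = ⁅CliffordAlgebra.ι Q u, CliffordAlgebra.ι Q v⁆} :=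
    fun u v => Submodule.subset_span ⟨u, v, rfl⟩
  exact sub_mem (add_mem (sub_mem (Submodule.smul_mem _ _ (mem x w)) (Submodule.smul_mem _ _ (mem y w)))
    (Submodule.smul_mem _ _ (mem z x))) (Submodule.smul_mem _ _ (mem z y))
end

section
/- The Lie algebra g_{D_l} is isomorphic, as a Lie algebra over ℂ, to so(2l, ℂ), the Lie algebra of skew-symmetric 2l × 2l complex matrices (skew-adjoint matrices with respect to the identity bilinear form) with the commutator bracket. -/
noncomputable section

open CliffordAlgebra

attribute [local instance 100] LieRing.ofAssociativeRing

/-- The `2l`-dimensional complex vector space `A` with basis `a_1, …, a_l, a_1^*, …, a_l^*`,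
realized as pairs of coordinate vectors. -/
abbrev Avec (l : ℕ) : Type := (Fin l → ℂ) × (Fin l → ℂ)

/-- The bilinear form `F(u, v) = ∑ u.1 i * v.2 i` on `Avec l`. -/
def Bform (l : ℕ) : LinearMap.BilinForm ℂ (Avec l) :=
  LinearMap.mk₂ ℂ (fun u v => ∑ i, u.1 i * v.2 i)
    (fun u u' v => by simp [add_mul, Finset.sum_add_distrib])
    (fun c u v => by simp [Finset.mul_sum, mul_assoc])
    (fun u v v' => by simp [mul_add, Finset.sum_add_distrib])
    (fun c u v => by simp [Finset.mul_sum, mul_left_comm])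

/-- The quadratic form `Q(∑ x_i a_i + ∑ y_i a_i^*) = ∑ x_i y_i` on `Avec l`. -/
def Qform (l : ℕ) : QuadraticForm ℂ (Avec l) := (Bform l).toQuadraticMap

/-- The basis vector `a_i`. -/
def av (l : ℕ) (i : Fin l) : Avec l := (Pi.single i 1, 0)

/-- The basis vector `a_i^*`. -/
def avs (l : ℕ) (i : Fin l) : Avec l := (0, Pi.single i 1)

/-- The normally ordered product `:xy: = (1/2)(ι(x)ι(y) − ι(y)ι(x))` in the Clifford algebra. -/
def nor (l : ℕ) (x y : Avec l) : CliffordAlgebra (Qform l) :=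
  (2⁻¹ : ℂ) • (ι (Qform l) x * ι (Qform l) y - ι (Qform l) y * ι (Qform l) x)

/-- `g_{D_l} = span_ℂ{ :xy: : x, y ∈ A }`. -/
def gD (l : ℕ) : Submodule ℂ (CliffordAlgebra (Qform l)) :=
  Submodule.span ℂ {z | ∃ x y : Avec l, z = nor l x y}

/-- `g_{B_l} = g_{D_l} + ι(A)`. -/
def gB (l : ℕ) : Submodule ℂ (CliffordAlgebra (Qform l)) :=
  gD l ⊔ LinearMap.range (ι (Qform l))

/-- `H_i = :a_i a_i^*:`. -/
def Hc (l : ℕ) (i : Fin l) : CliffordAlgebra (Qform l) := nor l (av l i) (avs l i)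

/-- `e_{ε_i−ε_j} = :a_i a_j^*:`. -/
def eM (l : ℕ) (i j : Fin l) : CliffordAlgebra (Qform l) := nor l (av l i) (avs l j)

/-- `e_{ε_i+ε_j} = :a_i a_j:`. -/
def eP (l : ℕ) (i j : Fin l) : CliffordAlgebra (Qform l) := nor l (av l i) (av l j)

/-- `f_{ε_i−ε_j} = :a_j a_i^*:`. -/
def fM (l : ℕ) (i j : Fin l) : CliffordAlgebra (Qform l) := nor l (av l j) (avs l i)

/-- `f_{ε_i+ε_j} = :a_j^* a_i^*:`. -/
def fP (l : ℕ) (i j : Fin l) : CliffordAlgebra (Qform l) := nor l (avs l j) (avs l i)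


namespace GDISO
open QuadraticMap

variable {l : ℕ}

theorem quad_comm {R : Type*} [Ring R] [Algebra ℂ R] (a b c d : R) (q r s t : ℂ)
    (hbc : b * c = q • (1:R) - c * b) (hbd : b * d = r • (1:R) - d * b)
    (hac : a * c = s • (1:R) - c * a) (had : a * d = t • (1:R) - d * a) :
    a * b * (c * d) - c * d * (a * b)
      = q • (a * d) - s • (b * d) + t • (b * c) - r • (a * c) + (s * r - t * q) • (1:R) := by
  have e1 : a * b * (c * d) = q • (a * d) - a * (c * (b * d)) := by
    rw [show a * b * (c * d) = a * ((b * c) * d) by noncomm_ring, hbc]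
    simp only [sub_mul, mul_sub, smul_mul_assoc, mul_smul_comm, one_mul, mul_one, mul_assoc]
  have e2 : a * (c * (b * d)) = r • (a * c) - a * c * (d * b) := by
    rw [hbd]
    simp only [sub_mul, mul_sub, smul_mul_assoc, mul_smul_comm, one_mul, mul_one, mul_assoc]
  have e3 : a * c * (d * b) = s • (d * b) - c * (a * d * b) := by
    rw [hac]
    simp only [sub_mul, mul_sub, smul_mul_assoc, mul_smul_comm, one_mul, mul_one, mul_assoc]
  have e4 : c * (a * d * b) = t • (c * b) - c * (d * (a * b)) := by
    rw [had]
    simp only [sub_mul, mul_sub, smul_mul_assoc, mul_smul_comm, one_mul, mul_one, mul_assoc]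
  rw [e1, e2, e3, e4, hbd, hbc]
  have h5 : c * d * (a * b) = c * (d * (a * b)) := by noncomm_ring
  rw [h5]
  module

theorem trip_comm {R : Type*} [Ring R] [Algebra ℂ R] (a b w : R) (q s : ℂ)
    (hbw : b * w = q • (1:R) - w * b) (haw : a * w = s • (1:R) - w * a) :
    a * b * w - w * (a * b) = q • a - s • b := by
  have e1 : a * b * w = q • a - a * w * b := by
    rw [show a * b * w = a * (b * w) by noncomm_ring, hbw]
    simp only [sub_mul, mul_sub, smul_mul_assoc, mul_smul_comm, one_mul, mul_one, mul_assoc]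
  rw [e1, haw]
  have h5 : w * (a * b) = w * a * b := by noncomm_ring
  rw [h5]
  simp only [sub_mul, smul_mul_assoc, one_mul]
  abel

theorem ι_comm (x y : Avec l) :
    ι (Qform l) x * ι (Qform l) y
      = polar (Qform l) x y • (1 : CliffordAlgebra (Qform l))
        - ι (Qform l) y * ι (Qform l) x := by
  rw [CliffordAlgebra.ι_mul_ι_comm, Algebra.algebraMap_eq_smul_one]

theorem nor_eq (x y : Avec l) :
    nor l x y = ι (Qform l) x * ι (Qform l) y
      - ((2⁻¹ : ℂ) * polar (Qform l) x y) • (1 : CliffordAlgebra (Qform l)) := by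
  rw [nor, eq_comm, ι_comm x y]
  module

end GDISO
namespace GDISO
open QuadraticMap
variable {l : ℕ}

theorem bracket_nor (u v w z : Avec l) :
    nor l u v * nor l w z - nor l w z * nor l u v =
      polar (Qform l) v w • nor l u z - polar (Qform l) u w • nor l v z
        + polar (Qform l) u z • nor l v w - polar (Qform l) v z • nor l u w := by
  have H := quad_comm (ι (Qform l) u) (ι (Qform l) v) (ι (Qform l) w) (ι (Qform l) z)
    (polar (Qform l) v w) (polar (Qform l) v z) (polar (Qform l) u w) (polar (Qform l) u z)
    (ι_comm v w) (ι_comm v z) (ι_comm u w) (ι_comm u z)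
  have hpoly : ∀ x y : Avec l, nor l x y = ι (Qform l) x * ι (Qform l) y
      - ((2⁻¹ : ℂ) * polar (Qform l) x y) • 1 := fun x y => nor_eq x y
  rw [hpoly u v, hpoly w z, hpoly u z, hpoly v z, hpoly v w, hpoly u w]
  have expand : ∀ (X Y : CliffordAlgebra (Qform l)) (α β : ℂ),
      (X - α • 1) * (Y - β • 1) - (Y - β • 1) * (X - α • 1) = X * Y - Y * X := by
    intro X Y α β
    simp only [sub_mul, mul_sub, smul_mul_assoc, mul_smul_comm, one_mul, mul_one]
    module
  rw [show ι (Qform l) u * ι (Qform l) v * (ι (Qform l) w * ι (Qform l) z) = 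
    (ι (Qform l) u * ι (Qform l) v) * (ι (Qform l) w * ι (Qform l) z) from rfl] at H
  rw [expand]
  rw [H]
  have h2 : (2:ℂ) ≠ 0 := two_ne_zero
  match_scalars <;> ring
end GDISO
namespace GDISO
open QuadraticMap
variable {l : ℕ}

theorem nor_ι_comm (u v w : Avec l) :
    nor l u v * ι (Qform l) w - ι (Qform l) w * nor l u v =
      polar (Qform l) v w • ι (Qform l) u - polar (Qform l) u w • ι (Qform l) v := by
  have H := trip_comm (ι (Qform l) u) (ι (Qform l) v) (ι (Qform l) w)
    (polar (Qform l) v w) (polar (Qform l) u w) (ι_comm v w) (ι_comm u w)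
  rw [nor_eq]
  have expand : ∀ (X W : CliffordAlgebra (Qform l)) (α : ℂ),
      (X - α • 1) * W - W * (X - α • 1) = X * W - W * X := by
    intro X W α
    simp only [sub_mul, mul_sub, smul_mul_assoc, mul_smul_comm, one_mul, mul_one]
    module
  rw [expand, H]

theorem nor_swap (x y : Avec l) : nor l y x = - nor l x y := by
  rw [nor, nor]; module

@[simp] theorem nor_self (x : Avec l) : nor l x x = 0 := by
  rw [nor]; simp

theorem nor_add_left (x x' y : Avec l) : nor l (x + x') y = nor l x y + nor l x' y := by
  simp only [nor, map_add, add_mul, mul_add]; module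

theorem nor_add_right (x y y' : Avec l) : nor l x (y + y') = nor l x y + nor l x y' := by
  simp only [nor, map_add, add_mul, mul_add]; module

theorem nor_smul_left (a : ℂ) (x y : Avec l) : nor l (a • x) y = a • nor l x y := by
  simp only [nor, LinearMap.map_smul, smul_mul_assoc, mul_smul_comm, smul_sub, smul_smul]
  rw [mul_comm]

theorem nor_smul_right (a : ℂ) (x y : Avec l) : nor l x (a • y) = a • nor l x y := by
  simp only [nor, LinearMap.map_smul, smul_mul_assoc, mul_smul_comm, smul_sub, smul_smul]
  rw [mul_comm]

theorem polar_Qform (x y : Avec l) :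
    polar (Qform l) x y = (∑ i, x.1 i * y.2 i) + (∑ i, y.1 i * x.2 i) := by
  rw [Qform, LinearMap.BilinMap.polar_toQuadraticMap]
  rfl
end GDISO
namespace GDISO
open QuadraticMap
variable {l : ℕ}

def rC : ℂ := (Real.sqrt 2 : ℂ)⁻¹
def wC : ℂ := Complex.I * rC

theorem rC_ne_zero : rC ≠ 0 := by
  simp only [rC, ne_eq, inv_eq_zero, Complex.ofReal_eq_zero]
  positivity

theorem wC_ne_zero : wC ≠ 0 := mul_ne_zero Complex.I_ne_zero rC_ne_zero

theorem rC_sq : rC * rC = 2⁻¹ := by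
  rw [rC, ← mul_inv, ← Complex.ofReal_mul, Real.mul_self_sqrt (by norm_num)]
  norm_num

theorem wC_sq : wC * wC = -2⁻¹ := by
  rw [wC, mul_mul_mul_comm, Complex.I_mul_I, rC_sq]
  ring

def Tlin (l : ℕ) : Avec l →ₗ[ℂ] Avec l where
  toFun p := (rC • p.1 + wC • p.2, rC • p.1 - wC • p.2)
  map_add' p q := by
    refine Prod.ext ?_ ?_ <;> funext i <;>
      simp [Pi.smul_apply, Pi.add_apply, smul_eq_mul] <;> ring
  map_smul' a p := by
    refine Prod.ext ?_ ?_ <;> funext i <;>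
      simp [Pi.smul_apply, Pi.add_apply, smul_eq_mul] <;> ring

def Glin (l : ℕ) : Avec l →ₗ[ℂ] Avec l where
  toFun p := ((2 * rC)⁻¹ • (p.1 + p.2), (2 * wC)⁻¹ • (p.1 - p.2))
  map_add' p q := by
    refine Prod.ext ?_ ?_ <;> funext i <;>
      simp [Pi.smul_apply, Pi.add_apply, smul_eq_mul] <;> ring
  map_smul' a p := by
    refine Prod.ext ?_ ?_ <;> funext i <;>
      simp [Pi.smul_apply, Pi.add_apply, smul_eq_mul] <;> ring

def Tequiv (l : ℕ) : Avec l ≃ₗ[ℂ] Avec l :=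
  LinearEquiv.ofLinear (Tlin l) (Glin l)
    (LinearMap.ext fun p => by
      simp only [LinearMap.comp_apply, Tlin, Glin, LinearMap.coe_mk, AddHom.coe_mk,
        LinearMap.id_apply]
      refine Prod.ext ?_ ?_ <;> funext i <;>
        simp only [Pi.smul_apply, Pi.add_apply, Pi.sub_apply, smul_eq_mul] <;>
        field_simp [rC_ne_zero, wC_ne_zero] <;> ring)
    (LinearMap.ext fun p => by
      simp only [LinearMap.comp_apply, Tlin, Glin, LinearMap.coe_mk, AddHom.coe_mk,
        LinearMap.id_apply]
      refine Prod.ext ?_ ?_ <;> funext i <;>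
        simp only [Pi.smul_apply, Pi.add_apply, Pi.sub_apply, smul_eq_mul] <;>
        field_simp [rC_ne_zero, wC_ne_zero] <;> ring)

def σl (l : ℕ) : Fin (2 * l) ≃ (Fin l ⊕ Fin l) := (finCongr (two_mul l)).trans finSumFinEquiv.symm

def bb (l : ℕ) : Module.Basis (Fin l ⊕ Fin l) ℂ (Avec l) :=
  (Pi.basisFun ℂ (Fin l)).prod (Pi.basisFun ℂ (Fin l))

def cb (l : ℕ) : Module.Basis (Fin (2 * l)) ℂ (Avec l) :=
  ((bb l).map (Tequiv l)).reindex (σl l).symm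

theorem cb_apply (k : Fin (2 * l)) : cb l k = Tequiv l (bb l (σl l k)) := by
  rw [cb, Module.Basis.reindex_apply, Equiv.symm_symm, Module.Basis.map_apply]

theorem cb_inl {k : Fin (2 * l)} {i : Fin l} (h : σl l k = Sum.inl i) :
    cb l k = (rC • (Pi.single i 1 : Fin l → ℂ), rC • (Pi.single i 1 : Fin l → ℂ)) := by
  rw [cb_apply, h]
  have hb : bb l (Sum.inl i) = ((Pi.single i 1 : Fin l → ℂ), (0 : Fin l → ℂ)) := by
    simp [bb, Module.Basis.prod_apply, Pi.basisFun_apply]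
  rw [hb]
  simp only [Tequiv, LinearEquiv.ofLinear_apply, Tlin, LinearMap.coe_mk, AddHom.coe_mk]
  simp

theorem cb_inr {k : Fin (2 * l)} {i : Fin l} (h : σl l k = Sum.inr i) :
    cb l k = (wC • (Pi.single i 1 : Fin l → ℂ), (-wC) • (Pi.single i 1 : Fin l → ℂ)) := by
  rw [cb_apply, h]
  have hb : bb l (Sum.inr i) = ((0 : Fin l → ℂ), (Pi.single i 1 : Fin l → ℂ)) := by
    simp [bb, Module.Basis.prod_apply, Pi.basisFun_apply]
  rw [hb]
  simp only [Tequiv, LinearEquiv.ofLinear_apply, Tlin, LinearMap.coe_mk, AddHom.coe_mk]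
  refine Prod.ext ?_ ?_ <;> funext t <;>
    simp [Pi.smul_apply, smul_eq_mul]

theorem sum_single_mul (a b : ℂ) (i j : Fin l) :
    (∑ t, a * (Pi.single i 1 : Fin l → ℂ) t * (b * (Pi.single j 1 : Fin l → ℂ) t))
      = if i = j then a * b else 0 := by
  simp only [Pi.single_apply, mul_ite, ite_mul, mul_one, mul_zero, zero_mul]
  rw [Finset.sum_ite_eq']
  simp [eq_comm]

theorem polar_scaled (a b a' b' : ℂ) (i j : Fin l) :
    polar (Qform l) (a • (Pi.single i 1 : Fin l → ℂ), b • (Pi.single i 1 : Fin l → ℂ))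
      (a' • (Pi.single j 1 : Fin l → ℂ), b' • (Pi.single j 1 : Fin l → ℂ))
    = if i = j then a * b' + a' * b else 0 := by
  rw [polar_Qform]
  simp only [Pi.smul_apply, smul_eq_mul]
  rw [sum_single_mul a b' i j, sum_single_mul a' b j i]
  rcases eq_or_ne i j with rfl | hij
  · simp
  · simp [hij, Ne.symm hij]

theorem polar_cb (k m : Fin (2 * l)) :
    polar (Qform l) (cb l k) (cb l m) = if k = m then 1 else 0 := by
  have hkm : (k = m) ↔ (σl l k = σl l m) := ⟨fun h => by rw [h], fun h => (σl l).injective h⟩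
  rcases h1 : σl l k with i | i <;> rcases h2 : σl l m with j | j
  · rw [cb_inl h1, cb_inl h2, polar_scaled]
    have : (k = m) ↔ (i = j) := by rw [hkm, h1, h2]; simp
    rcases eq_or_ne i j with rfl | hij
    · rw [if_pos rfl, if_pos (this.mpr rfl)]
      rw [rC_sq]; norm_num
    · rw [if_neg hij, if_neg (fun h => hij (this.mp h))]
  · rw [cb_inl h1, cb_inr h2, polar_scaled]
    have hne : k ≠ m := fun h => by rw [h, h2] at h1; exact Sum.inr_ne_inl h1
    rw [if_neg hne]
    rcases eq_or_ne i j with rfl | hij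
    · rw [if_pos rfl]; ring
    · rw [if_neg hij]
  · rw [cb_inr h1, cb_inl h2, polar_scaled]
    have hne : k ≠ m := fun h => by rw [h, h2] at h1; exact Sum.inl_ne_inr h1
    rw [if_neg hne]
    rcases eq_or_ne i j with rfl | hij
    · rw [if_pos rfl]; ring
    · rw [if_neg hij]
  · rw [cb_inr h1, cb_inr h2, polar_scaled]
    have : (k = m) ↔ (i = j) := by rw [hkm, h1, h2]; simp
    rcases eq_or_ne i j with rfl | hij
    · rw [if_pos rfl, if_pos (this.mpr rfl)]
      have : wC * -wC + wC * -wC = -2 * (wC * wC) := by ring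
      rw [this, wC_sq]; norm_num
    · rw [if_neg hij, if_neg (fun h => hij (this.mp h))]

end GDISO
namespace GDISO
open QuadraticMap Matrix
variable {l : ℕ}

def Sg (l : ℕ) (k m : Fin (2 * l)) : CliffordAlgebra (Qform l) := nor l (cb l k) (cb l m)

theorem Sg_swap (k m : Fin (2 * l)) : Sg l m k = - Sg l k m := nor_swap _ _

theorem brkt_Sg (k m p q : Fin (2 * l)) :
    Sg l k m * Sg l p q - Sg l p q * Sg l k m =
      (if m = p then (1:ℂ) else 0) • Sg l k q - (if k = p then (1:ℂ) else 0) • Sg l m q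
      + (if k = q then (1:ℂ) else 0) • Sg l m p - (if m = q then (1:ℂ) else 0) • Sg l k p := by
  have h := bracket_nor (cb l k) (cb l m) (cb l p) (cb l q)
  rw [polar_cb, polar_cb, polar_cb, polar_cb] at h
  exact h

theorem Sg_gamma (k m p : Fin (2 * l)) :
    Sg l k m * ι (Qform l) (cb l p) - ι (Qform l) (cb l p) * Sg l k m =
      (if m = p then (1:ℂ) else 0) • ι (Qform l) (cb l k)
        - (if k = p then (1:ℂ) else 0) • ι (Qform l) (cb l m) := by
  have h := nor_ι_comm (cb l k) (cb l m) (cb l p)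
  rw [polar_cb, polar_cb] at h
  exact h

def Phi (l : ℕ) : Matrix (Fin (2 * l)) (Fin (2 * l)) ℂ →ₗ[ℂ] CliffordAlgebra (Qform l) where
  toFun M := (2⁻¹ : ℂ) • ∑ k, ∑ m, M k m • Sg l k m
  map_add' M N := by
    simp only [Matrix.add_apply, add_smul, Finset.sum_add_distrib, smul_add]
  map_smul' a M := by
    simp only [Matrix.smul_apply, smul_eq_mul, mul_smul, RingHom.id_apply,
      ← Finset.smul_sum]
    rw [smul_comm]

theorem Phi_apply (M : Matrix (Fin (2 * l)) (Fin (2 * l)) ℂ) :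
    Phi l M = (2⁻¹ : ℂ) • ∑ k, ∑ m, M k m • Sg l k m := rfl

theorem brkt_Phi_Sg (M : Matrix (Fin (2 * l)) (Fin (2 * l)) ℂ) (hM : Mᵀ = -M)
    (p q : Fin (2 * l)) :
    Phi l M * Sg l p q - Sg l p q * Phi l M
      = ∑ k, M k p • Sg l k q - ∑ k, M k q • Sg l k p := by
  have hMe : ∀ a b, M a b = - M b a := fun a b => by
    have := congrFun (congrFun hM b) a
    simpa [Matrix.transpose_apply, Matrix.neg_apply] using this
  rw [Phi_apply, smul_mul_assoc, mul_smul_comm, ← smul_sub]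
  rw [Finset.sum_mul, Finset.mul_sum, ← Finset.sum_sub_distrib]
  have hcollapse : ∀ k : Fin (2 * l),
      ((∑ m, M k m • Sg l k m) * Sg l p q - Sg l p q * ∑ m, M k m • Sg l k m)
        = ∑ m, M k m • (Sg l k m * Sg l p q - Sg l p q * Sg l k m) := by
    intro k
    rw [Finset.sum_mul, Finset.mul_sum, ← Finset.sum_sub_distrib]
    refine Finset.sum_congr rfl fun m _ => ?_
    rw [smul_mul_assoc, mul_smul_comm, smul_sub]
  rw [Finset.sum_congr rfl fun k _ => hcollapse k]
  simp only [brkt_Sg, smul_sub, smul_add, smul_smul, mul_ite, mul_one, mul_zero, ite_smul,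
    zero_smul, smul_ite, smul_zero, one_smul, Finset.sum_sub_distrib, Finset.sum_add_distrib,
    Finset.sum_ite_irrel, Finset.sum_ite_eq', Finset.mem_univ, if_true, Finset.sum_const_zero]
  have hB : ∑ m, M p m • Sg l m q = - ∑ m, M m p • Sg l m q := by
    simp only [hMe p, neg_smul, Finset.sum_neg_distrib]
  have hC : ∑ m, M q m • Sg l m p = - ∑ m, M m q • Sg l m p := by
    simp only [hMe q, neg_smul, Finset.sum_neg_distrib]
  rw [hB, hC]
  module

end GDISO
namespace GDISO
open QuadraticMap Matrix
variable {l : ℕ}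

theorem skew_entry {M : Matrix (Fin (2 * l)) (Fin (2 * l)) ℂ} (hM : Mᵀ = -M)
    (a b : Fin (2 * l)) : M a b = - M b a := by
  have := congrFun (congrFun hM b) a
  simpa [Matrix.transpose_apply, Matrix.neg_apply] using this

theorem commutator_expand (x : CliffordAlgebra (Qform l))
    (f : Fin (2 * l) → Fin (2 * l) → ℂ) (g : Fin (2 * l) → Fin (2 * l) → CliffordAlgebra (Qform l)) :
    x * ((2⁻¹:ℂ) • ∑ p, ∑ q, f p q • g p q) - ((2⁻¹:ℂ) • ∑ p, ∑ q, f p q • g p q) * x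
      = (2⁻¹:ℂ) • ∑ p, ∑ q, f p q • (x * g p q - g p q * x) := by
  rw [mul_smul_comm, smul_mul_assoc, ← smul_sub, Finset.mul_sum, Finset.sum_mul,
    ← Finset.sum_sub_distrib]
  congr 1
  refine Finset.sum_congr rfl fun p _ => ?_
  rw [Finset.mul_sum, Finset.sum_mul, ← Finset.sum_sub_distrib]
  refine Finset.sum_congr rfl fun q _ => ?_
  rw [mul_smul_comm, smul_mul_assoc, smul_sub]

theorem brkt_Phi_gamma (M : Matrix (Fin (2 * l)) (Fin (2 * l)) ℂ) (hM : Mᵀ = -M)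
    (p : Fin (2 * l)) :
    Phi l M * ι (Qform l) (cb l p) - ι (Qform l) (cb l p) * Phi l M
      = ι (Qform l) (∑ k, M k p • cb l k) := by
  have hMe := skew_entry hM
  rw [Phi_apply, smul_mul_assoc, mul_smul_comm, ← smul_sub]
  rw [Finset.sum_mul, Finset.mul_sum, ← Finset.sum_sub_distrib]
  have hcollapse : ∀ k : Fin (2 * l),
      ((∑ m, M k m • Sg l k m) * ι (Qform l) (cb l p)
        - ι (Qform l) (cb l p) * ∑ m, M k m • Sg l k m)
        = ∑ m, M k m • (Sg l k m * ι (Qform l) (cb l p) - ι (Qform l) (cb l p) * Sg l k m) := by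
    intro k
    rw [Finset.sum_mul, Finset.mul_sum, ← Finset.sum_sub_distrib]
    refine Finset.sum_congr rfl fun m _ => ?_
    rw [smul_mul_assoc, mul_smul_comm, smul_sub]
  rw [Finset.sum_congr rfl fun k _ => hcollapse k]
  simp only [Sg_gamma, smul_sub, smul_smul, mul_ite, mul_one, mul_zero, ite_smul,
    zero_smul, smul_ite, smul_zero, one_smul, Finset.sum_sub_distrib,
    Finset.sum_ite_irrel, Finset.sum_ite_eq', Finset.mem_univ, if_true, Finset.sum_const_zero]
  have hB : ∑ m, M p m • ι (Qform l) (cb l m) = - ∑ m, M m p • ι (Qform l) (cb l m) := by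
    simp only [hMe p, neg_smul, Finset.sum_neg_distrib]
  rw [hB, map_sum]
  simp only [LinearMap.map_smul]
  module

theorem SS_NM (M N : Matrix (Fin (2 * l)) (Fin (2 * l)) ℂ) (hM : Mᵀ = -M) (hN : Nᵀ = -N) :
    ∑ k, ∑ m, (N * M) k m • Sg l k m = - ∑ k, ∑ m, (M * N) k m • Sg l k m := by
  have hMe := skew_entry hM
  have hNe := skew_entry hN
  rw [Finset.sum_comm, ← Finset.sum_neg_distrib]
  refine Finset.sum_congr rfl fun k _ => ?_
  rw [← Finset.sum_neg_distrib]
  refine Finset.sum_congr rfl fun m _ => ?_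
  have he : (N * M) m k = (M * N) k m := by
    rw [Matrix.mul_apply, Matrix.mul_apply]
    refine Finset.sum_congr rfl fun j _ => ?_
    rw [hNe m j, hMe j k]
    ring
  rw [he, Sg_swap k m, smul_neg]

theorem Phi_bracket (M N : Matrix (Fin (2 * l)) (Fin (2 * l)) ℂ) (hM : Mᵀ = -M) (hN : Nᵀ = -N) :
    Phi l M * Phi l N - Phi l N * Phi l M = Phi l (M * N - N * M) := by
  have hMe := skew_entry hM
  have hNe := skew_entry hN
  have hI : ∑ p, ∑ q, ∑ k, N p q • (M k p • Sg l k q)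
      = ∑ k, ∑ q, (M * N) k q • Sg l k q := by
    calc ∑ p, ∑ q, ∑ k, N p q • (M k p • Sg l k q)
        = ∑ q, ∑ p, ∑ k, N p q • (M k p • Sg l k q) := Finset.sum_comm
      _ = ∑ q, ∑ k, ∑ p, N p q • (M k p • Sg l k q) :=
          Finset.sum_congr rfl fun q _ => Finset.sum_comm
      _ = ∑ q, ∑ k, (M * N) k q • Sg l k q := by
          refine Finset.sum_congr rfl fun q _ => Finset.sum_congr rfl fun k _ => ?_
          rw [Matrix.mul_apply, Finset.sum_smul]
          refine Finset.sum_congr rfl fun p _ => ?_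
          rw [smul_smul, mul_comm]
      _ = ∑ k, ∑ q, (M * N) k q • Sg l k q := Finset.sum_comm
  have hII : ∑ p, ∑ q, ∑ k, N p q • (M k q • Sg l k p)
      = - ∑ k, ∑ q, (M * N) k q • Sg l k q := by
    calc ∑ p, ∑ q, ∑ k, N p q • (M k q • Sg l k p)
        = ∑ p, ∑ k, ∑ q, N p q • (M k q • Sg l k p) :=
          Finset.sum_congr rfl fun p _ => Finset.sum_comm
      _ = ∑ k, ∑ p, ∑ q, N p q • (M k q • Sg l k p) := Finset.sum_comm
      _ = ∑ k, ∑ p, -((M * N) k p • Sg l k p) := by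
          refine Finset.sum_congr rfl fun k _ => Finset.sum_congr rfl fun p _ => ?_
          have hq : ∀ q, N p q • (M k q • Sg l k p) = -((M k q * N q p) • Sg l k p) := by
            intro q
            rw [smul_smul, hNe p q, show -N q p * M k q = -(M k q * N q p) from by ring,
              neg_smul]
          simp only [hq, Finset.sum_neg_distrib, ← Finset.sum_smul, Matrix.mul_apply]
      _ = - ∑ k, ∑ q, (M * N) k q • Sg l k q := by
          simp only [Finset.sum_neg_distrib]
  have key : Phi l M * Phi l N - Phi l N * Phi l M = ∑ k, ∑ q, (M * N) k q • Sg l k q := by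
    have hce := commutator_expand (Phi l M) (fun p q => N p q) (fun p q => Sg l p q)
    beta_reduce at hce
    rw [show Phi l N = (2⁻¹:ℂ) • ∑ p, ∑ q, N p q • Sg l p q from rfl, hce]
    have hmid : ∑ p, ∑ q, N p q • (Phi l M * Sg l p q - Sg l p q * Phi l M)
        = (∑ p, ∑ q, ∑ k, N p q • (M k p • Sg l k q))
          - ∑ p, ∑ q, ∑ k, N p q • (M k q • Sg l k p) := by
      simp only [brkt_Phi_Sg M hM, smul_sub, Finset.smul_sum, Finset.sum_sub_distrib]
    rw [hmid, hI, hII]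
    module
  rw [key, Phi_apply]
  simp only [Matrix.sub_apply, sub_smul, Finset.sum_sub_distrib]
  rw [SS_NM M N hM hN]
  module

end GDISO
namespace GDISO
open QuadraticMap Matrix
variable {l : ℕ}

def Nlin (l : ℕ) : Avec l →ₗ[ℂ] Avec l →ₗ[ℂ] CliffordAlgebra (Qform l) :=
  LinearMap.mk₂ ℂ (nor l) nor_add_left nor_smul_left nor_add_right nor_smul_right

theorem Nlin_apply (x y : Avec l) : Nlin l x y = nor l x y := rfl

theorem gD_eq_span :
    gD l = Submodule.span ℂ (Set.range fun km : Fin (2 * l) × Fin (2 * l) => Sg l km.1 km.2) := by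
  apply le_antisymm
  · rw [gD, Submodule.span_le]
    rintro z ⟨x, y, rfl⟩
    have hx : x = ∑ k, (cb l).repr x k • cb l k := ((cb l).sum_repr x).symm
    have hy : y = ∑ m, (cb l).repr y m • cb l m := ((cb l).sum_repr y).symm
    have h1 : Nlin l x = ∑ k, ((cb l).repr x k) • Nlin l (cb l k) := by
      conv_lhs => rw [hx]
      rw [map_sum]
      exact Finset.sum_congr rfl fun k _ => LinearMap.map_smul _ _ _
    have h2 : ∀ k, Nlin l (cb l k) y = ∑ m, ((cb l).repr y m) • Sg l k m := by
      intro k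
      conv_lhs => rw [hy]
      rw [map_sum]
      exact Finset.sum_congr rfl fun m _ => LinearMap.map_smul _ _ _
    have : nor l x y = ∑ k, ∑ m, ((cb l).repr x k * (cb l).repr y m) • Sg l k m := by
      rw [← Nlin_apply, h1, LinearMap.sum_apply]
      refine Finset.sum_congr rfl fun k _ => ?_
      rw [LinearMap.smul_apply, h2 k, Finset.smul_sum]
      refine Finset.sum_congr rfl fun m _ => ?_
      rw [smul_smul]
    rw [this]
    refine Submodule.sum_mem _ fun k _ => Submodule.sum_mem _ fun m _ =>
      Submodule.smul_mem _ _ (Submodule.subset_span ⟨(k, m), rfl⟩)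
  · rw [Submodule.span_le]
    rintro z ⟨⟨k, m⟩, rfl⟩
    exact Submodule.subset_span ⟨cb l k, cb l m, rfl⟩

theorem mem_skewLie (M : Matrix (Fin (2 * l)) (Fin (2 * l)) ℂ) :
    M ∈ skewAdjointMatricesLieSubalgebra (1 : Matrix (Fin (2 * l)) (Fin (2 * l)) ℂ)
      ↔ Mᵀ = -M := by
  rw [mem_skewAdjointMatricesLieSubalgebra, mem_skewAdjointMatricesSubmodule]
  simp [Matrix.IsSkewAdjoint, Matrix.IsAdjointPair]

theorem Phi_mem_gD (M : Matrix (Fin (2 * l)) (Fin (2 * l)) ℂ) : Phi l M ∈ gD l := by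
  rw [Phi_apply, gD_eq_span]
  refine Submodule.smul_mem _ _ (Submodule.sum_mem _ fun k _ => Submodule.sum_mem _ fun m _ =>
    Submodule.smul_mem _ _ (Submodule.subset_span ⟨(k, m), rfl⟩))

theorem Phi_stdBasis (k m : Fin (2 * l)) :
    Phi l (Matrix.single k m 1 - Matrix.single m k 1) = Sg l k m := by
  have hE : ∀ a b : Fin (2 * l),
      Phi l (Matrix.single a b 1) = (2⁻¹ : ℂ) • Sg l a b := by
    intro a b
    rw [Phi_apply]
    congr 1
    simp only [Matrix.single, Matrix.of_apply, ite_smul, one_smul, zero_smul,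
      ite_and, Finset.sum_ite_irrel, Finset.sum_ite_eq, Finset.sum_const_zero,
      Finset.mem_univ, if_true]
  rw [_root_.map_sub, hE, hE, Sg_swap m k]
  module

theorem gD_le_map :
    gD l ≤ Submodule.map (Phi l)
      (skewAdjointMatricesSubmodule (1 : Matrix (Fin (2 * l)) (Fin (2 * l)) ℂ)) := by
  rw [gD_eq_span, Submodule.span_le]
  rintro z ⟨⟨k, m⟩, rfl⟩
  refine Submodule.mem_map.mpr
    ⟨Matrix.single k m 1 - Matrix.single m k 1, ?_, Phi_stdBasis k m⟩
  rw [mem_skewAdjointMatricesSubmodule]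
  show Matrix.IsAdjointPair _ _ _ _
  rw [Matrix.IsAdjointPair]
  have ht : ∀ a b : Fin (2 * l), (Matrix.single a b (1:ℂ))ᵀ = Matrix.single b a 1 := by
    intro a b
    ext i j
    simp [Matrix.single, Matrix.transpose_apply, and_comm]
  simp only [Matrix.transpose_sub, ht, Matrix.mul_one, Matrix.one_mul, neg_sub]

end GDISO
namespace GDISO
open QuadraticMap Matrix
variable {l : ℕ}

theorem iota_inj : Function.Injective (ι (Qform l)) := by
  letI : Invertible (2:ℂ) := invertibleOfNonzero two_ne_zero
  intro x y h
  have h2 := congrArg (CliffordAlgebra.equivExterior (Qform l)) h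
  simp only [CliffordAlgebra.equivExterior, CliffordAlgebra.changeFormEquiv_apply,
    CliffordAlgebra.changeForm_ι] at h2
  exact (ExteriorAlgebra.ι_inj ℂ x y).mp h2

theorem Phi_inj_skew (M : Matrix (Fin (2 * l)) (Fin (2 * l)) ℂ) (hM : Mᵀ = -M)
    (h0 : Phi l M = 0) : M = 0 := by
  have key : ∀ p k, M k p = 0 := by
    intro p
    have hb := brkt_Phi_gamma M hM p
    rw [h0, zero_mul, mul_zero, sub_zero] at hb
    have h3 : (∑ k, M k p • cb l k) = 0 := by
      apply iota_inj
      rw [← hb, map_zero]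
    have := Fintype.linearIndependent_iff.mp (cb l).linearIndependent (fun k => M k p) h3
    exact this
  ext k p
  exact key p k

end GDISO
namespace GDISO
open QuadraticMap Matrix
variable {l : ℕ}

theorem skew_of_mem {M : Matrix (Fin (2 * l)) (Fin (2 * l)) ℂ}
    (hM : M ∈ skewAdjointMatricesSubmodule (1 : Matrix (Fin (2 * l)) (Fin (2 * l)) ℂ)) :
    Mᵀ = -M := by
  rw [mem_skewAdjointMatricesSubmodule] at hM
  simpa [Matrix.IsSkewAdjoint, Matrix.IsAdjointPair] using hM

def LgD (l : ℕ) : LieSubalgebra ℂ (CliffordAlgebra (Qform l)) :=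
  { gD l with
    lie_mem' := by
      intro x y hx hy
      obtain ⟨M, hM, rfl⟩ := gD_le_map hx
      obtain ⟨N, hN, rfl⟩ := gD_le_map hy
      have hM' := skew_of_mem hM
      have hN' := skew_of_mem hN
      show ⁅Phi l M, Phi l N⁆ ∈ gD l
      rw [Ring.lie_def, Phi_bracket M N hM' hN']
      exact Phi_mem_gD _ }

theorem mem_LgD {x : CliffordAlgebra (Qform l)} : x ∈ LgD l ↔ x ∈ gD l := Iff.rfl

def gfun (l : ℕ)
    (M : skewAdjointMatricesLieSubalgebra (1 : Matrix (Fin (2 * l)) (Fin (2 * l)) ℂ)) :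
    LgD l := ⟨Phi l M.1, Phi_mem_gD M.1⟩

theorem skew_of_mem' {M : Matrix (Fin (2 * l)) (Fin (2 * l)) ℂ}
    (hM : M ∈ skewAdjointMatricesLieSubalgebra (1 : Matrix (Fin (2 * l)) (Fin (2 * l)) ℂ)) :
    Mᵀ = -M := skew_of_mem ((mem_skewAdjointMatricesLieSubalgebra _ M).mp hM)

theorem gfun_bij : Function.Bijective (gfun l) := by
  constructor
  · intro a b hab
    have h1 : Phi l a.1 = Phi l b.1 := congrArg Subtype.val hab
    have h2 : Phi l (a.1 - b.1) = 0 := by rw [LinearMap.map_sub, h1, sub_self]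
    have hsk : (a.1 - b.1)ᵀ = -(a.1 - b.1) := by
      rw [Matrix.transpose_sub, skew_of_mem' a.2, skew_of_mem' b.2]
      abel
    have := Phi_inj_skew _ hsk h2
    exact Subtype.ext (by rwa [sub_eq_zero] at this)
  · intro z
    obtain ⟨M, hM, hPhi⟩ := gD_le_map z.2
    refine ⟨⟨M, (mem_skewAdjointMatricesLieSubalgebra _ M).mpr hM⟩, Subtype.ext hPhi⟩

noncomputable def theEquiv (l : ℕ) :
    (skewAdjointMatricesLieSubalgebra (1 : Matrix (Fin (2 * l)) (Fin (2 * l)) ℂ))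
      ≃ₗ⁅ℂ⁆ LgD l where
  toFun := gfun l
  map_add' a b := by
    apply Subtype.ext
    show Phi l ((a + b : _) : Matrix _ _ ℂ) = Phi l a.1 + Phi l b.1
    rw [show ((a + b : _) : Matrix _ _ ℂ) = a.1 + b.1 from rfl, map_add]
  map_smul' a b := by
    apply Subtype.ext
    show Phi l ((a • b : _) : Matrix _ _ ℂ) = a • Phi l b.1
    rw [show ((a • b : _) : Matrix _ _ ℂ) = a • b.1 from rfl, LinearMap.map_smul]
  map_lie' {a b} := by
    apply Subtype.ext
    show Phi l (⁅a, b⁆ : _).1 = ⁅Phi l a.1, Phi l b.1⁆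
    have hco : (⁅a, b⁆ : _).1 = a.1 * b.1 - b.1 * a.1 := rfl
    rw [hco, Ring.lie_def, Phi_bracket a.1 b.1 (skew_of_mem' a.2) (skew_of_mem' b.2)]
  invFun := (Equiv.ofBijective (gfun l) gfun_bij).symm
  left_inv := (Equiv.ofBijective (gfun l) gfun_bij).left_inv
  right_inv := (Equiv.ofBijective (gfun l) gfun_bij).right_inv

end GDISO
/-- `g_{D_l}` is a Lie subalgebra of the Clifford algebra, and as a Lie algebra over `ℂ` it is
isomorphic to `so(2l, ℂ)`, the Lie algebra of skew-symmetric `2l × 2l` complex matrices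
(skew-adjoint matrices with respect to the identity bilinear form) with the commutator bracket. -/
theorem gD_iso_so (l : ℕ) (hl : 4 ≤ l) :
    ∃ L : LieSubalgebra ℂ (CliffordAlgebra (Qform l)),
      L.toSubmodule = gD l ∧
      Nonempty
        (L ≃ₗ⁅ℂ⁆ skewAdjointMatricesLieSubalgebra (1 : Matrix (Fin (2 * l)) (Fin (2 * l)) ℂ)) := by
  exact ⟨GDISO.LgD l, rfl, ⟨(GDISO.theEquiv l).symm⟩⟩

end
end

section
/- For all 1 ≤ i < j ≤ l the following coroot relations hold in Cliff(Q): ⁅e_{ε_i−ε_j}, f_{ε_i−ε_j}⁆ = H_i − H_j; ⁅e_{ε_i+ε_j}, f_{ε_i+ε_j}⁆ = H_i + H_j; and for all 1 ≤ i ≤ l: ⁅ι(a_i), ι(a_i^*)⁆ = 2·H_i (i.e. the coroot attached to the short root ε_i is h_{ε_i} = 2H_i). -/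
noncomputable section

open CliffordAlgebra

-- Auxiliary lemmas

lemma polar_av_avs (l : ℕ) (i j : Fin l) :
    QuadraticMap.polar (Qform l) (av l i) (avs l j) = if i = j then 1 else 0 := by
  rw [Qform, LinearMap.BilinMap.polar_toQuadraticMap]
  simp [Bform, av, avs, Pi.single_apply, Finset.sum_ite_eq, eq_comm]

lemma polar_av_av (l : ℕ) (i j : Fin l) :
    QuadraticMap.polar (Qform l) (av l i) (av l j) = 0 := by
  rw [Qform, LinearMap.BilinMap.polar_toQuadraticMap]
  simp [Bform, av]

lemma polar_avs_avs (l : ℕ) (i j : Fin l) :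
    QuadraticMap.polar (Qform l) (avs l i) (avs l j) = 0 := by
  rw [Qform, LinearMap.BilinMap.polar_toQuadraticMap]
  simp [Bform, avs]

-- anticommutation relations
lemma rel_ba_same (l : ℕ) (i : Fin l) :
    ι (Qform l) (avs l i) * ι (Qform l) (av l i)
      = 1 - ι (Qform l) (av l i) * ι (Qform l) (avs l i) := by
  have h := ι_mul_ι_add_swap (Q := Qform l) (av l i) (avs l i)
  rw [polar_av_avs, if_pos rfl, map_one] at h
  exact eq_sub_of_add_eq' h

lemma rel_ba_ne (l : ℕ) {i j : Fin l} (h : i ≠ j) :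
    ι (Qform l) (avs l j) * ι (Qform l) (av l i)
      = -(ι (Qform l) (av l i) * ι (Qform l) (avs l j)) := by
  have h2 := ι_mul_ι_add_swap (Q := Qform l) (av l i) (avs l j)
  rw [polar_av_avs, if_neg h] at h2
  simp only [map_zero] at h2
  exact eq_neg_of_add_eq_zero_right h2

lemma rel_aa (l : ℕ) (i j : Fin l) :
    ι (Qform l) (av l j) * ι (Qform l) (av l i)
      = -(ι (Qform l) (av l i) * ι (Qform l) (av l j)) := by
  have h2 := ι_mul_ι_add_swap (Q := Qform l) (av l i) (av l j)
  rw [polar_av_av] at h2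
  simp only [map_zero] at h2
  exact eq_neg_of_add_eq_zero_right h2

lemma rel_bb (l : ℕ) (i j : Fin l) :
    ι (Qform l) (avs l j) * ι (Qform l) (avs l i)
      = -(ι (Qform l) (avs l i) * ι (Qform l) (avs l j)) := by
  have h2 := ι_mul_ι_add_swap (Q := Qform l) (avs l i) (avs l j)
  rw [polar_avs_avs] at h2
  simp only [map_zero] at h2
  exact eq_neg_of_add_eq_zero_right h2

-- half-smul helper
lemma half_smul_double {M : Type*} [AddCommGroup M] [Module ℂ M] (x : M) :
    (2⁻¹ : ℂ) • (x + x) = x := by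
  rw [← two_smul ℂ x, smul_smul]; norm_num

lemma Hc_eq (l : ℕ) (i : Fin l) :
    Hc l i = ι (Qform l) (av l i) * ι (Qform l) (avs l i) - (2⁻¹ : ℂ) • 1 := by
  rw [Hc, nor, rel_ba_same]
  rw [show ι (Qform l) (av l i) * ι (Qform l) (avs l i) -
      (1 - ι (Qform l) (av l i) * ι (Qform l) (avs l i))
      = (ι (Qform l) (av l i) * ι (Qform l) (avs l i) +
        ι (Qform l) (av l i) * ι (Qform l) (avs l i)) - 1 by abel]
  rw [smul_sub, half_smul_double]

lemma eM_eq (l : ℕ) {i j : Fin l} (h : i ≠ j) :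
    eM l i j = ι (Qform l) (av l i) * ι (Qform l) (avs l j) := by
  rw [eM, nor, rel_ba_ne l h, sub_neg_eq_add, half_smul_double]

lemma fM_eq (l : ℕ) {i j : Fin l} (h : i ≠ j) :
    fM l i j = ι (Qform l) (av l j) * ι (Qform l) (avs l i) := by
  rw [fM, nor, rel_ba_ne l h.symm, sub_neg_eq_add, half_smul_double]

lemma eP_eq (l : ℕ) (i j : Fin l) :
    eP l i j = ι (Qform l) (av l i) * ι (Qform l) (av l j) := by
  rw [eP, nor, rel_aa l i j, sub_neg_eq_add, half_smul_double]

lemma fP_eq (l : ℕ) (i j : Fin l) :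
    fP l i j = ι (Qform l) (avs l j) * ι (Qform l) (avs l i) := by
  rw [fP, nor, show ι (Qform l) (avs l i) * ι (Qform l) (avs l j)
      = -(ι (Qform l) (avs l j) * ι (Qform l) (avs l i)) from rel_bb l j i,
    sub_neg_eq_add, half_smul_double]

-- abstract ring computations
lemma ring_key1 {R : Type*} [Ring R] (Ai Bi Aj Bj : R)
    (h1 : Bi * Ai = 1 - Ai * Bi) (h2 : Bj * Aj = 1 - Aj * Bj)
    (h3 : Bj * Ai = -(Ai * Bj)) (h4 : Bi * Aj = -(Aj * Bi))
    (h5 : Aj * Ai = -(Ai * Aj)) (h6 : Bi * Bj = -(Bj * Bi)) :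
    Ai * Bj * (Aj * Bi) - Aj * Bi * (Ai * Bj) = Ai * Bi - Aj * Bj := by
  have e1 : Ai * Bj * (Aj * Bi) = Ai * Bi - Ai * Aj * (Bj * Bi) := by
    calc Ai * Bj * (Aj * Bi) = Ai * (Bj * Aj) * Bi := by noncomm_ring
    _ = Ai * (1 - Aj * Bj) * Bi := by rw [h2]
    _ = Ai * Bi - Ai * (Aj * Bj) * Bi := by noncomm_ring
    _ = Ai * Bi - Ai * Aj * (Bj * Bi) := by noncomm_ring
  have e2 : Aj * Bi * (Ai * Bj) = Aj * Bj - Ai * Aj * (Bj * Bi) := by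
    calc Aj * Bi * (Ai * Bj) = Aj * (Bi * Ai) * Bj := by noncomm_ring
    _ = Aj * (1 - Ai * Bi) * Bj := by rw [h1]
    _ = Aj * Bj - (Aj * Ai) * (Bi * Bj) := by noncomm_ring
    _ = Aj * Bj - (-(Ai * Aj)) * (-(Bj * Bi)) := by rw [h5, h6]
    _ = Aj * Bj - Ai * Aj * (Bj * Bi) := by noncomm_ring
  rw [e1, e2]; noncomm_ring

lemma ring_key2 {R : Type*} [Ring R] (Ai Bi Aj Bj : R)
    (h1 : Bi * Ai = 1 - Ai * Bi) (h2 : Bj * Aj = 1 - Aj * Bj)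
    (h3 : Bj * Ai = -(Ai * Bj)) (h4 : Bi * Aj = -(Aj * Bi))
    (h5 : Aj * Ai = -(Ai * Aj)) (h6 : Bi * Bj = -(Bj * Bi)) :
    Ai * Aj * (Bj * Bi) - Bj * Bi * (Ai * Aj) = Ai * Bi + Aj * Bj - 1 := by
  have e3 : Bj * Bi * (Ai * Aj) = 1 - Aj * Bj - Ai * Bi + Ai * Aj * (Bj * Bi) := by
    calc Bj * Bi * (Ai * Aj) = Bj * (Bi * Ai) * Aj := by noncomm_ring
    _ = Bj * (1 - Ai * Bi) * Aj := by rw [h1]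
    _ = Bj * Aj - (Bj * Ai) * (Bi * Aj) := by noncomm_ring
    _ = (1 - Aj * Bj) - (-(Ai * Bj)) * (-(Aj * Bi)) := by rw [h2, h3, h4]
    _ = 1 - Aj * Bj - Ai * (Bj * Aj) * Bi := by noncomm_ring
    _ = 1 - Aj * Bj - Ai * (1 - Aj * Bj) * Bi := by rw [h2]
    _ = 1 - Aj * Bj - Ai * Bi + Ai * Aj * (Bj * Bi) := by noncomm_ring
  rw [e3]; noncomm_ring

/-- Coroot relations: for `i < j`, `⁅e_{ε_i−ε_j}, f_{ε_i−ε_j}⁆ = H_i − H_j` and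
`⁅e_{ε_i+ε_j}, f_{ε_i+ε_j}⁆ = H_i + H_j`; and for all `i`, `⁅ι(a_i), ι(a_i^*)⁆ = 2·H_i`
(the coroot attached to the short root `ε_i` is `h_{ε_i} = 2H_i`). -/
theorem coroot_relations (l : ℕ) (hl : 4 ≤ l) :
    (∀ i j : Fin l, i < j →
      ⁅eM l i j, fM l i j⁆ = Hc l i - Hc l j ∧
      ⁅eP l i j, fP l i j⁆ = Hc l i + Hc l j) ∧
    ∀ i : Fin l, ⁅ι (Qform l) (av l i), ι (Qform l) (avs l i)⁆ = (2 : ℂ) • Hc l i := by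
  constructor
  · intro i j hij
    have hne : i ≠ j := ne_of_lt hij
    set Ai := ι (Qform l) (av l i)
    set Bi := ι (Qform l) (avs l i)
    set Aj := ι (Qform l) (av l j)
    set Bj := ι (Qform l) (avs l j)
    have h1 : Bi * Ai = 1 - Ai * Bi := rel_ba_same l i
    have h2 : Bj * Aj = 1 - Aj * Bj := rel_ba_same l j
    have h3 : Bj * Ai = -(Ai * Bj) := rel_ba_ne l hne
    have h4 : Bi * Aj = -(Aj * Bi) := rel_ba_ne l hne.symm
    have h5 : Aj * Ai = -(Ai * Aj) := rel_aa l i j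
    have h6 : Bi * Bj = -(Bj * Bi) := rel_bb l j i
    constructor
    · rw [Ring.lie_def, eM_eq l hne, fM_eq l hne, Hc_eq, Hc_eq,
        ring_key1 Ai Bi Aj Bj h1 h2 h3 h4 h5 h6]
      abel
    · rw [Ring.lie_def, eP_eq, fP_eq, Hc_eq, Hc_eq,
        ring_key2 Ai Bi Aj Bj h1 h2 h3 h4 h5 h6]
      have hone : (2⁻¹:ℂ) • (1:CliffordAlgebra (Qform l)) + (2⁻¹:ℂ) • 1 = 1 := by
        rw [← smul_add]; exact half_smul_double 1
      conv_lhs => rw [← hone]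
      abel
  · intro i
    rw [Ring.lie_def, Hc_eq, rel_ba_same]
    rw [smul_sub, smul_smul]
    norm_num
    rw [two_smul]
    abel

end
end
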